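/- Let m > 0 and let g : ℝ³ → ℂ be a Schwartz function. Then the second-order vacuum integrand V_g is integrable on ℝ³ × ℝ³ × ℝ³ (i.e. on ℝ⁹); that is, with the adiabatic cut-off g the second-order vacuum energy coefficient of the regularised φ³ theory on the noncommutative Minkowski space is ultraviolet finite. -/

import Mathlib

open MeasureTheory

/-- Euclidean three-space. -/
abbrev R3 := EuclideanSpace ℝ (Fin 3)

/-- The one-particle energy `ω(p) = √(‖p‖² + m²)` for `p ∈ ℝ³`. -/
noncomputable def ω3 (m : ℝ) (p : R3) : ℝ := Real.sqrt (‖p‖ ^ 2 + m ^ 2)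

/-- The second-order vacuum integrand `V_g(p₁,p₂,p₃)` of the regularised `φ³`
theory on the noncommutative Minkowski space, with adiabatic cut-off `g`. -/
noncomputable def V (m : ℝ) (g : R3 → ℂ) (p : R3 × R3 × R3) : ℝ :=
  ‖g ((3 : ℝ)⁻¹ • (p.1 + p.2.1 + p.2.2))‖ ^ 2 *
    (Real.exp (-‖p.1 - (3 : ℝ)⁻¹ • (p.1 + p.2.1 + p.2.2)‖ ^ 2 -
        (ω3 m p.1 - (ω3 m p.1 + ω3 m p.2.1 + ω3 m p.2.2) / 3) ^ 2) *
      Real.exp (-‖p.2.1 - (3 : ℝ)⁻¹ • (p.1 + p.2.1 + p.2.2)‖ ^ 2 -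
        (ω3 m p.2.1 - (ω3 m p.1 + ω3 m p.2.1 + ω3 m p.2.2) / 3) ^ 2) *
      Real.exp (-‖p.2.2 - (3 : ℝ)⁻¹ • (p.1 + p.2.1 + p.2.2)‖ ^ 2 -
        (ω3 m p.2.2 - (ω3 m p.1 + ω3 m p.2.1 + ω3 m p.2.2) / 3) ^ 2)) /
    ((ω3 m p.1 + ω3 m p.2.1 + ω3 m p.2.2) * (ω3 m p.1 * ω3 m p.2.1 * ω3 m p.2.2))

/-!
After passing to centre-of-mass coordinates `u = p₁ - p̄`, `v = p₂ - p̄`, `w = p̄`, the integrand is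
dominated by `‖g‖∞ / (3 m⁴) · exp(-‖u‖²) exp(-‖v‖²) ‖g(w)‖`: drop the energy parts and the third
Gaussian from the exponent, and bound each `ω(p_j)` below by `m`. The Gaussians are integrable in
`u` and `v`, the Schwartz function `g` in `w`, and a linear change of variables preserves
integrability with respect to Haar measure.
-/

open Real

section CentreOfMass

variable {E : Type*} [AddCommGroup E] [Module ℝ E]

noncomputable def centreOfMassCoords : (E × E × E) ≃ₗ[ℝ] (E × E × E) where
  toFun p := (p.1 - (3 : ℝ)⁻¹ • (p.1 + p.2.1 + p.2.2),
    p.2.1 - (3 : ℝ)⁻¹ • (p.1 + p.2.1 + p.2.2), (3 : ℝ)⁻¹ • (p.1 + p.2.1 + p.2.2))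
  invFun q := (q.2.2 + q.1, q.2.2 + q.2.1, q.2.2 - q.1 - q.2.1)
  map_add' a b := by
    simp only [Prod.fst_add, Prod.snd_add, Prod.mk_add_mk, Prod.mk.injEq]
    refine ⟨by module, by module, by module⟩
  map_smul' c a := by
    simp only [Prod.smul_fst, Prod.smul_snd, Prod.smul_mk, RingHom.id_apply, Prod.mk.injEq]
    refine ⟨by module, by module, by module⟩
  left_inv p := by
    rw [Prod.ext_iff, Prod.ext_iff]
    refine ⟨by module, by module, by module⟩
  right_inv q := by
    rw [Prod.ext_iff, Prod.ext_iff]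
    refine ⟨by module, by module, by module⟩

end CentreOfMass

theorem MeasureTheory.Integrable.comp_linearEquiv {E F : Type*} [NormedAddCommGroup E]
    [NormedSpace ℝ E] [MeasurableSpace E] [BorelSpace E] [FiniteDimensional ℝ E] {μ : Measure E}
    [μ.IsAddHaarMeasure] [NormedAddCommGroup F] (T : E ≃ₗ[ℝ] E) {f : E → F}
    (hf : Integrable f μ) : Integrable (fun x ↦ f (T x)) μ := by
  let t : E ≃ᵐ E := T.toContinuousLinearEquiv.toHomeomorph.toMeasurableEquiv
  refine (integrable_map_equiv t f).mp ?_
  rw [show Measure.map t μ = _ from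
    Measure.map_linearMap_addHaar_eq_smul_addHaar μ (LinearEquiv.isUnit_det' T).ne_zero]
  exact hf.smul_measure ENNReal.ofReal_ne_top

section Gaussian

variable {E : Type*} [NormedAddCommGroup E] [InnerProductSpace ℝ E] [FiniteDimensional ℝ E]
  [MeasurableSpace E] [BorelSpace E]

theorem integrable_exp_neg_sq_norm : Integrable (fun v : E ↦ rexp (-‖v‖ ^ 2)) := by
  refine (GaussianFourier.integrable_cexp_neg_mul_sq_norm_add (V := E) (b := 1)
    (by norm_num) 0 0).norm.congr (Filter.Eventually.of_forall fun v ↦ ?_)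
  simp [Complex.norm_exp, ← Complex.ofReal_pow]

noncomputable def gaussianGaussianMul (f : E → ℝ) (q : E × E × E) : ℝ :=
  rexp (-‖q.1‖ ^ 2) * (rexp (-‖q.2.1‖ ^ 2) * f q.2.2)

theorem integrable_gaussianGaussianMul {f : E → ℝ} (hf : Integrable f) :
    Integrable (gaussianGaussianMul f) :=
  integrable_exp_neg_sq_norm.mul_prod (integrable_exp_neg_sq_norm.mul_prod hf)

end Gaussian

instance : (volume : Measure (R3 × R3 × R3)).IsAddHaarMeasure :=
  have := Measure.prod.instIsAddHaarMeasure (volume : Measure R3) (volume : Measure R3)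
  Measure.prod.instIsAddHaarMeasure _ _

theorem le_ω3 (m : ℝ) (p : R3) : m ≤ ω3 m p :=
  Real.le_sqrt_of_sq_le (le_add_of_nonneg_left (sq_nonneg _))

theorem continuous_ω3 (m : ℝ) : Continuous (ω3 m) := by
  unfold ω3
  fun_prop

theorem three_mul_pow_four_le {m a b c : ℝ} (hm : 0 ≤ m) (ha : m ≤ a) (hb : m ≤ b)
    (hc : m ≤ c) : 3 * m ^ 4 ≤ (a + b + c) * (a * b * c) := by
  have ha₀ := hm.trans ha
  have hb₀ := hm.trans hb
  have habc : m * m * m ≤ a * b * c := by gcongr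
  calc 3 * m ^ 4 = (m + m + m) * (m * m * m) := by ring
    _ ≤ (a + b + c) * (a * b * c) := mul_le_mul (by linarith) habc (by positivity) (by linarith)

theorem V_nonneg (m : ℝ) (g : R3 → ℂ) (p : R3 × R3 × R3) : 0 ≤ V m g p := by
  unfold V ω3
  positivity

theorem continuous_V {m : ℝ} (hm : 0 < m) {g : R3 → ℂ} (hg : Continuous g) :
    Continuous (V m g) := by
  have hω := continuous_ω3 m
  have hpos : ∀ p, 0 < ω3 m p := fun p ↦ hm.trans_le (le_ω3 m p)
  unfold V
  refine Continuous.div (by fun_prop) (by fun_prop) fun p ↦ ?_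
  have := hpos p.1; have := hpos p.2.1; have := hpos p.2.2
  positivity

theorem V_le_gaussianGaussianMul {m C : ℝ} (hm : 0 < m) {g : R3 → ℂ} (hg : ∀ x, ‖g x‖ ≤ C)
    (p : R3 × R3 × R3) :
    V m g p ≤ C / (3 * m ^ 4) * gaussianGaussianMul (‖g ·‖) (centreOfMassCoords p) := by
  set c : R3 := (3 : ℝ)⁻¹ • (p.1 + p.2.1 + p.2.2)
  set ω₁ := ω3 m p.1; set ω₂ := ω3 m p.2.1; set ω₃ := ω3 m p.2.2
  set ωbar := (ω₁ + ω₂ + ω₃) / 3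
  have hg_sq : ‖g c‖ ^ 2 ≤ C * ‖g c‖ := by
    rw [sq]; exact mul_le_mul_of_nonneg_right (hg c) (norm_nonneg _)
  have hCg : 0 ≤ C * ‖g c‖ := (sq_nonneg _).trans hg_sq
  have hden := three_mul_pow_four_le hm.le (le_ω3 m p.1) (le_ω3 m p.2.1)
    (le_ω3 m p.2.2)
  have hexp₁ : -‖p.1 - c‖ ^ 2 - (ω₁ - ωbar) ^ 2 ≤ -‖p.1 - c‖ ^ 2 :=
    sub_le_self _ (sq_nonneg _)
  have hexp₂ : -‖p.2.1 - c‖ ^ 2 - (ω₂ - ωbar) ^ 2 ≤ -‖p.2.1 - c‖ ^ 2 :=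
    sub_le_self _ (sq_nonneg _)
  have hexp₃ : rexp (-‖p.2.2 - c‖ ^ 2 - (ω₃ - ωbar) ^ 2) ≤ 1 :=
    exp_le_one_iff.mpr (by linarith [sq_nonneg ‖p.2.2 - c‖, sq_nonneg (ω₃ - ωbar)])
  have hexp : rexp (-‖p.1 - c‖ ^ 2 - (ω₁ - ωbar) ^ 2) * rexp (-‖p.2.1 - c‖ ^ 2 - (ω₂ - ωbar) ^ 2) *
      rexp (-‖p.2.2 - c‖ ^ 2 - (ω₃ - ωbar) ^ 2) ≤
      rexp (-‖p.1 - c‖ ^ 2) * rexp (-‖p.2.1 - c‖ ^ 2) * 1 := by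
    gcongr
  calc V m g p
      = ‖g c‖ ^ 2 * (rexp (-‖p.1 - c‖ ^ 2 - (ω₁ - ωbar) ^ 2) *
          rexp (-‖p.2.1 - c‖ ^ 2 - (ω₂ - ωbar) ^ 2) * rexp (-‖p.2.2 - c‖ ^ 2 - (ω₃ - ωbar) ^ 2)) /
          ((ω₁ + ω₂ + ω₃) * (ω₁ * ω₂ * ω₃)) := rfl
    _ ≤ C * ‖g c‖ * (rexp (-‖p.1 - c‖ ^ 2) * rexp (-‖p.2.1 - c‖ ^ 2) * 1) / (3 * m ^ 4) :=
      div_le_div₀ (mul_nonneg hCg (by positivity)) (mul_le_mul hg_sq hexp (by positivity) hCg)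
        (by positivity) hden
    _ = C / (3 * m ^ 4) * gaussianGaussianMul (‖g ·‖) (centreOfMassCoords p) := by
      simp only [gaussianGaussianMul, centreOfMassCoords, LinearEquiv.coe_mk, LinearMap.coe_mk,
        AddHom.coe_mk]
      ring

theorem stmt16 (m : ℝ) (hm : 0 < m) (g : SchwartzMap R3 ℂ) :
    Integrable (V m g) := by
  have hdom : Integrable fun p ↦ SchwartzMap.seminorm ℝ 0 0 g / (3 * m ^ 4) *
      gaussianGaussianMul (‖g ·‖) (centreOfMassCoords p) :=
    ((integrable_gaussianGaussianMul g.integrable.norm).comp_linearEquiv _).const_mul _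
  refine hdom.mono' (continuous_V hm g.continuous).aestronglyMeasurable
    (Filter.Eventually.of_forall fun p ↦ ?_)
  rw [Real.norm_of_nonneg (V_nonneg m g p)]
  exact V_le_gaussianGaussianMul hm (SchwartzMap.norm_le_seminorm ℝ g) p
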